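/- For 0 < x < y < 1, the integral over z in (0,1) of 1/sqrt(|x-z|·|y-z|) dz equals π + 2·ln((sqrt(1-x) + sqrt(1-y)) / |sqrt(x) - sqrt(y)|). -/

import Mathlib

/-!
Split `[0, 1]` at `x` and `y`. Each piece has an elementary antiderivative: `2 log (√(z - x) + √(z - y))`
to the right of `y` (and its mirror image to the left of `x`), `arcsin ((2z - x - y) / (y - x))`
between them. As the integrand is nonnegative, the antiderivative also yields integrability of the
singular integrand. The two logarithmic pieces combine through `y - x = (√y - √x) (√y + √x)`.
-/

open Real Set MeasureTheory intervalIntegral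

theorem intervalIntegrable_and_integral_eq_sub_of_hasDerivAt_of_nonneg {f F : ℝ → ℝ} {a b : ℝ}
    (hab : a ≤ b) (hcont : ContinuousOn F (Icc a b))
    (hderiv : ∀ z ∈ Ioo a b, HasDerivAt F (f z) z) (hf : ∀ z ∈ Ioo a b, 0 ≤ f z) :
    IntervalIntegrable f volume a b ∧ ∫ z in a..b, f z = F b - F a := by
  have hint : IntervalIntegrable f volume a b :=
    intervalIntegrable_deriv_of_nonneg (by rwa [uIcc_of_le hab]) (by simpa [hab] using hderiv)
      (by simpa [hab] using hf)
  exact ⟨hint, integral_eq_sub_of_hasDerivAt_of_le hab hcont hderiv hint⟩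

theorem hasDerivAt_two_mul_log_sqrt_add_sqrt {a b z : ℝ} (hb : b < z) (ha : a < z) :
    HasDerivAt (fun z => 2 * log (√(z - a) + √(z - b))) (1 / √(|a - z| * |b - z|)) z := by
  have hza : 0 < z - a := by linarith
  have hzb : 0 < z - b := by linarith
  have hA : 0 < √(z - a) := sqrt_pos.2 hza
  have hB : 0 < √(z - b) := sqrt_pos.2 hzb
  have hdA := (hasDerivAt_sqrt hza.ne').comp z ((hasDerivAt_id z).sub_const a)
  have hdB := (hasDerivAt_sqrt hzb.ne').comp z ((hasDerivAt_id z).sub_const b)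
  refine (((hdA.add hdB).log (add_pos hA hB).ne').const_mul 2).congr_deriv ?_
  rw [abs_sub_comm, abs_of_pos hza, abs_sub_comm, abs_of_pos hzb, sqrt_mul hza.le]
  simp only [Pi.add_apply, Function.comp_apply, id]
  field_simp
  ring

theorem hasDerivAt_arcsin_div {x y z : ℝ} (hxz : x < z) (hzy : z < y) :
    HasDerivAt (fun z => arcsin ((2 * z - x - y) / (y - x))) (1 / √(|x - z| * |y - z|)) z := by
  have hyx : 0 < y - x := by linarith
  have hlin : HasDerivAt (fun z => (2 * z - x - y) / (y - x)) (2 / (y - x)) z := by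
    simpa using ((((hasDerivAt_id z).const_mul 2).sub_const x).sub_const y).div_const (y - x)
  have h1 : (2 * z - x - y) / (y - x) ≠ -1 := by
    rw [ne_eq, div_eq_iff hyx.ne']; linarith
  have h2 : (2 * z - x - y) / (y - x) ≠ 1 := by
    rw [ne_eq, div_eq_iff hyx.ne']; linarith
  refine ((hasDerivAt_arcsin h1 h2).comp z hlin).congr_deriv ?_
  have hsq : 1 - ((2 * z - x - y) / (y - x)) ^ 2 = (2 / (y - x)) ^ 2 * ((z - x) * (y - z)) := by
    field_simp; ring
  rw [hsq, sqrt_mul (by positivity), sqrt_sq (by positivity), abs_sub_comm,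
    abs_of_pos (by linarith : 0 < z - x), abs_of_pos (by linarith : 0 < y - z)]
  have : 0 < √((z - x) * (y - z)) := sqrt_pos.2 (mul_pos (by linarith) (by linarith))
  field_simp

theorem integral_one_div_sqrt_abs_mul_abs_right {a b u : ℝ} (hab : a < b) (hbu : b ≤ u) :
    IntervalIntegrable (fun z => 1 / √(|a - z| * |b - z|)) volume b u ∧
      ∫ z in b..u, 1 / √(|a - z| * |b - z|) = 2 * log (√(u - a) + √(u - b)) - log (b - a) := by
  have hcont : ContinuousOn (fun z => 2 * log (√(z - a) + √(z - b))) (Icc b u) := by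
    refine continuousOn_const.mul (ContinuousOn.log (by fun_prop) fun z hz => ?_)
    have : 0 < √(z - a) := sqrt_pos.2 (sub_pos.2 (hab.trans_le hz.1))
    positivity
  obtain ⟨hint, hval⟩ := intervalIntegrable_and_integral_eq_sub_of_hasDerivAt_of_nonneg hbu hcont
    (fun z hz => hasDerivAt_two_mul_log_sqrt_add_sqrt hz.1 (hab.trans hz.1))
    (fun _ _ => by positivity)
  refine ⟨hint, hval.trans ?_⟩
  rw [sub_self, sqrt_zero, add_zero, log_sqrt (sub_nonneg.2 hab.le)]
  ring

theorem integral_one_div_sqrt_abs_mul_abs_left {a b l : ℝ} (hab : a < b) (hla : l ≤ a) :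
    IntervalIntegrable (fun z => 1 / √(|a - z| * |b - z|)) volume l a ∧
      ∫ z in l..a, 1 / √(|a - z| * |b - z|) = 2 * log (√(a - l) + √(b - l)) - log (b - a) := by
  obtain ⟨hint, hval⟩ :=
    integral_one_div_sqrt_abs_mul_abs_right (neg_lt_neg hab) (neg_le_neg hla)
  set g : ℝ → ℝ := fun w => 1 / √(|-b - w| * |-a - w|)
  have hrefl : (fun z => 1 / √(|a - z| * |b - z|)) = fun z => g (-z) := by
    ext z
    simp only [g, sub_neg_eq_add, neg_add_eq_sub, abs_sub_comm z, mul_comm]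
  rw [hrefl, integral_comp_neg, hval]
  refine ⟨?_, by ring_nf⟩
  simpa using (IntervalIntegrable.iff_comp_neg).mp hint.symm

theorem integral_one_div_sqrt_abs_mul_abs_between {x y : ℝ} (hxy : x < y) :
    IntervalIntegrable (fun z => 1 / √(|x - z| * |y - z|)) volume x y ∧
      ∫ z in x..y, 1 / √(|x - z| * |y - z|) = π := by
  obtain ⟨hint, hval⟩ := intervalIntegrable_and_integral_eq_sub_of_hasDerivAt_of_nonneg hxy.le
    (by fun_prop) (fun z hz => hasDerivAt_arcsin_div hz.1 hz.2) (fun _ _ => by positivity)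
  refine ⟨hint, hval.trans ?_⟩
  have hyx : y - x ≠ 0 := (sub_pos.2 hxy).ne'
  rw [show (2 * y - x - y) / (y - x) = 1 by field_simp; ring,
    show (2 * x - x - y) / (y - x) = -1 by field_simp; ring, arcsin_one, arcsin_neg, arcsin_one]
  ring

theorem log_sub_eq_log_sqrt_add_sqrt_add_log_sqrt_sub_sqrt {x y : ℝ} (hx : 0 ≤ x) (hxy : x < y) :
    log (y - x) = log (√x + √y) + log (√y - √x) := by
  have hsxy : √x < √y := sqrt_lt_sqrt hx hxy
  have hsy : 0 < √y := (sqrt_nonneg x).trans_lt hsxy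
  rw [← log_mul (by positivity) (by linarith)]
  congr 1
  linear_combination sq_sqrt hx - sq_sqrt (hx.trans hxy.le)

theorem stmt0 (x y : ℝ) (hx : 0 < x) (hxy : x < y) (hy : y < 1) :
    ∫ z in (0:ℝ)..1, 1 / Real.sqrt (|x - z| * |y - z|) =
      Real.pi + 2 * Real.log
        ((Real.sqrt (1 - x) + Real.sqrt (1 - y)) / |Real.sqrt x - Real.sqrt y|) := by
  obtain ⟨hint₁, hval₁⟩ := integral_one_div_sqrt_abs_mul_abs_left hxy hx.le
  obtain ⟨hint₂, hval₂⟩ := integral_one_div_sqrt_abs_mul_abs_between hxy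
  obtain ⟨hint₃, hval₃⟩ := integral_one_div_sqrt_abs_mul_abs_right hxy hy.le
  rw [← integral_add_adjacent_intervals hint₁ (hint₂.trans hint₃),
    ← integral_add_adjacent_intervals hint₂ hint₃, hval₁, hval₂, hval₃]
  have hsxy : √x < √y := sqrt_lt_sqrt hx.le hxy
  have h1x : 0 < √(1 - x) := sqrt_pos.2 (by linarith)
  rw [abs_sub_comm, abs_of_pos (sub_pos.2 hsxy), log_div (by positivity) (sub_pos.2 hsxy).ne',
    log_sub_eq_log_sqrt_add_sqrt_add_log_sqrt_sub_sqrt hx.le hxy]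
  simp only [sub_zero]
  ring
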